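/- If U₁ and U₂ are real d×d orthogonal matrices (d = 2^n) and I_{d,m}((U₁ ⊗ U₂)|Φ_d⟩) = m(d−1) with m ≥ 2, then U₁ = ±U₂. -/

import Mathlib

open Matrix Kronecker

noncomputable def Phi (d : ℕ) : Fin d × Fin d → ℂ :=
  fun p => if p.1 = p.2 then (((Real.sqrt d)⁻¹ : ℝ) : ℂ) else 0

noncomputable def satwap (d m x : ℕ) (a : Fin d) : Fin d → ℂ :=
  fun k => (((Real.sqrt d)⁻¹ : ℝ) : ℂ) *
    Complex.exp (2 * Real.pi * Complex.I / d * (k : ℕ) *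
      ((a : ℕ) - ((x : ℂ) - 1 / 2) / m))

noncomputable def Aobs (d m x l : ℕ) : Matrix (Fin d) (Fin d) ℂ :=
  ∑ a : Fin d, Complex.exp (2 * Real.pi * Complex.I / d) ^ ((a : ℕ) * l) •
    Matrix.vecMulVec (satwap d m x a) (star (satwap d m x a))

/-- The Bell operator B = Σ_{x=1}^m Σ_{l=1}^{d-1} A_x^l ⊗ (A_x^l)^*. -/
noncomputable def Bop (d m : ℕ) : Matrix (Fin d × Fin d) (Fin d × Fin d) ℂ :=
  ∑ x ∈ Finset.Icc 1 m, ∑ l ∈ Finset.Icc 1 (d - 1),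
    (Aobs d m x l) ⊗ₖ ((Aobs d m x l).map (starRingEnd ℂ))

noncomputable def omg (d : ℕ) : ℂ := Complex.exp (2 * Real.pi * Complex.I / d)

lemma omg_pow_d (d : ℕ) (hd : 0 < d) : omg d ^ (d:ℕ) = 1 := by
  have hd' : (d:ℂ) ≠ 0 := Nat.cast_ne_zero.mpr hd.ne'
  rw [omg, ← Complex.exp_nat_mul]
  have : (d:ℂ) * (2 * Real.pi * Complex.I / d) = 2 * Real.pi * Complex.I := by
    field_simp
  rw [this]
  exact Complex.exp_two_pi_mul_I

lemma omg_zpow_eq_one (d : ℕ) (hd : 0 < d) (t : ℤ) (ht : (d:ℤ) ∣ t) :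
    omg d ^ t = 1 := by
  obtain ⟨e, rfl⟩ := ht
  rw [_root_.zpow_mul, zpow_natCast, omg_pow_d d hd, _root_.one_zpow]

lemma omg_zpow_ne_one (d : ℕ) (hd : 0 < d) (t : ℤ) (ht : ¬ (d:ℤ) ∣ t) :
    omg d ^ t ≠ 1 := by
  rw [omg, ← Complex.exp_int_mul]
  intro hone
  obtain ⟨k, hk⟩ := Complex.exp_eq_one_iff.mp hone
  apply ht
  have h2 : (2 * (Real.pi:ℂ) * Complex.I) ≠ 0 := by
    simp [Real.pi_ne_zero, Complex.I_ne_zero, Complex.ofReal_ne_zero]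
  have hd' : (d:ℂ) ≠ 0 := Nat.cast_ne_zero.mpr hd.ne'
  have h3 : (t:ℂ) = (k:ℂ) * d := by
    field_simp at hk
    have hk2 : (t:ℂ) * (2 * Real.pi * Complex.I) = (k:ℂ) * (d:ℂ) * (2 * Real.pi * Complex.I) := by
      rw [hk]; ring
    exact mul_right_cancel₀ h2 hk2
  have h4 : (t:ℤ) = k * d := by exact_mod_cast h3
  exact ⟨k, by rw [h4, mul_comm]⟩

lemma geom_fin_sum (d : ℕ) (hd : 0 < d) (t : ℤ) :
    ∑ a : Fin d, (omg d ^ t) ^ (a:ℕ) = if (d:ℤ) ∣ t then (d:ℂ) else 0 := by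
  split_ifs with h
  · rw [omg_zpow_eq_one d hd t h]; simp
  · rw [Fin.sum_univ_eq_sum_range, geom_sum_eq (omg_zpow_ne_one d hd t h)]
    rw [← zpow_natCast (omg d ^ t), ← _root_.zpow_mul, mul_comm, _root_.zpow_mul,
      zpow_natCast, omg_pow_d d hd, _root_.one_zpow, sub_self, zero_div]

open Fin.NatCast

lemma dvd_iff_eq_add (d l : ℕ) (j k : Fin d) :
    (d:ℤ) ∣ ((l:ℤ) + (j:ℕ) - (k:ℕ)) ↔ ((j:ℕ) + l) % d = (k:ℕ) := by
  have hmod := Nat.modEq_iff_dvd (n := d) (a := (k:ℕ)) (b := (j:ℕ) + l)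
  have hk : (k:ℕ) % d = (k:ℕ) := Nat.mod_eq_of_lt k.isLt
  constructor
  · intro h
    have h2 : (k:ℕ) ≡ (j:ℕ) + l [MOD d] := by
      rw [hmod]; push_cast; convert h using 1; ring
    have h3 := h2.symm
    unfold Nat.ModEq at h3
    omega
  · intro h
    have h2 : (k:ℕ) ≡ (j:ℕ) + l [MOD d] := by
      unfold Nat.ModEq; omega
    rw [hmod] at h2
    convert h2 using 1; push_cast; ring

lemma conj_theta (d : ℕ) :
    (starRingEnd ℂ) (2 * Real.pi * Complex.I / d) = -(2 * Real.pi * Complex.I / d) := by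
  simp only [map_div₀, _root_.map_mul, Complex.conj_I, map_ofNat, Complex.conj_ofReal,
    Complex.conj_natCast]
  ring

lemma conj_alpha (m x : ℕ) :
    (starRingEnd ℂ) (((x : ℂ) - 1 / 2) / m) = ((x : ℂ) - 1 / 2) / m := by
  simp only [map_div₀, map_sub, _root_.map_one, map_ofNat, Complex.conj_natCast]

lemma Aobs_apply (d m x l : ℕ) (hd : 0 < d) (j k : Fin d) :
    Aobs d m x l j k =
      if ((j:ℕ) + l) % d = (k:ℕ) then
        Complex.exp (2 * Real.pi * Complex.I / d * (((k:ℕ):ℂ) - ((j:ℕ):ℂ)) *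
          (((x : ℂ) - 1 / 2) / m))
      else 0 := by
  classical
  have hd' : (d:ℂ) ≠ 0 := Nat.cast_ne_zero.mpr hd.ne'
  set θ : ℂ := 2 * Real.pi * Complex.I / d with hθ
  set α : ℂ := ((x : ℂ) - 1 / 2) / m with hα
  set s : ℂ := (((Real.sqrt d)⁻¹ : ℝ) : ℂ) with hs
  have hss : s * s = (d:ℂ)⁻¹ := by
    rw [hs, ← Complex.ofReal_mul, ← mul_inv, Real.mul_self_sqrt (Nat.cast_nonneg d)]
    push_cast; ring
  set t : ℤ := (l:ℤ) + (j:ℕ) - (k:ℕ) with htdef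
  have key : ∀ a : Fin d,
      Complex.exp θ ^ ((a:ℕ) * l) *
        (Matrix.vecMulVec (satwap d m x a) (star (satwap d m x a)) j k)
      = ((d:ℂ)⁻¹ * Complex.exp (θ * (((k:ℕ):ℂ) - ((j:ℕ):ℂ)) * α)) *
        (omg d ^ t) ^ (a:ℕ) := by
    intro a
    have h1 : satwap d m x a j = s * Complex.exp (θ * ((j:ℕ):ℂ) * (((a:ℕ):ℂ) - α)) := rfl
    have h2 : star (satwap d m x a) k
        = s * Complex.exp (-(θ * ((k:ℕ):ℂ) * (((a:ℕ):ℂ) - α))) := by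
      have hh : star (satwap d m x a) k = (starRingEnd ℂ) (satwap d m x a k) := rfl
      rw [hh, satwap]
      rw [_root_.map_mul, ← Complex.exp_conj]
      simp only [map_sub, _root_.map_mul, map_div₀, _root_.map_one, map_ofNat,
        Complex.conj_natCast, Complex.conj_ofReal, Complex.conj_I]
      congr 1
      rw [hθ, hα]
      congr 1
      ring
    have h3 : Complex.exp θ ^ ((a:ℕ) * l) = Complex.exp ((((a:ℕ) * l : ℕ):ℂ) * θ) := by
      rw [Complex.exp_nat_mul]
    have h4 : (omg d ^ t) ^ (a:ℕ) = Complex.exp (((t * (a:ℕ) : ℤ):ℂ) * θ) := by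
      rw [← zpow_natCast (omg d ^ t), ← _root_.zpow_mul]
      show Complex.exp θ ^ (t * (a:ℕ)) = _
      rw [← Complex.exp_int_mul]
    rw [Matrix.vecMulVec_apply, h1, h2, h3, h4]
    calc Complex.exp ((((a:ℕ) * l : ℕ):ℂ) * θ) *
          (s * Complex.exp (θ * ((j:ℕ):ℂ) * (((a:ℕ):ℂ) - α)) *
            (s * Complex.exp (-(θ * ((k:ℕ):ℂ) * (((a:ℕ):ℂ) - α)))))
        = (s * s) * Complex.exp ((((a:ℕ) * l : ℕ):ℂ) * θ + θ * ((j:ℕ):ℂ) * (((a:ℕ):ℂ) - α)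
            + -(θ * ((k:ℕ):ℂ) * (((a:ℕ):ℂ) - α))) := by
          rw [Complex.exp_add, Complex.exp_add]; ring
      _ = (d:ℂ)⁻¹ * Complex.exp (θ * (((k:ℕ):ℂ) - ((j:ℕ):ℂ)) * α + ((t * (a:ℕ) : ℤ):ℂ) * θ) := by
          rw [hss]
          congr 1
          push_cast [htdef]
          ring
      _ = ((d:ℂ)⁻¹ * Complex.exp (θ * (((k:ℕ):ℂ) - ((j:ℕ):ℂ)) * α)) *
            Complex.exp (((t * (a:ℕ) : ℤ):ℂ) * θ) := by
          rw [Complex.exp_add]; ring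
  have hsum : Aobs d m x l j k
      = ∑ a : Fin d, Complex.exp θ ^ ((a:ℕ) * l) *
          (Matrix.vecMulVec (satwap d m x a) (star (satwap d m x a)) j k) := by
    rw [Aobs]
    rw [Matrix.sum_apply]
    simp [Matrix.smul_apply, smul_eq_mul]
    rfl
  rw [hsum]
  simp_rw [key]
  rw [← Finset.mul_sum, geom_fin_sum d hd t]
  by_cases h : (d:ℤ) ∣ t
  · rw [if_pos h, if_pos ((dvd_iff_eq_add d l j k).mp h)]
    rw [mul_comm ((d:ℂ)⁻¹) _, mul_assoc, inv_mul_cancel₀ hd', mul_one]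
  · rw [if_neg h, if_neg (fun hc => h ((dvd_iff_eq_add d l j k).mpr hc)), mul_zero]

lemma exp_wrap_sum (m : ℕ) (hm : 2 ≤ m) (ε : ℤ) (hε : ε = 0 ∨ ε = 1 ∨ ε = -1) :
    ∑ x ∈ Finset.Icc 1 m, Complex.exp (2 * Real.pi * Complex.I * ((((x:ℕ):ℂ) - 1/2)/m) * (ε:ℂ))
      = if ε = 0 then (m:ℂ) else 0 := by
  have hm0 : 0 < m := by omega
  by_cases h0 : ε = 0
  · subst h0
    simp [Nat.card_Icc]
  rw [if_neg h0]
  have hεm : ¬ (m:ℤ) ∣ ε := by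
    intro hdvd
    have h1 : (m:ℤ) ∣ 1 := by
      rcases hε with h | h | h
      · exact absurd h h0
      · rwa [h] at hdvd
      · rw [h] at hdvd; exact (dvd_neg).mp hdvd
    have h2 := Int.le_of_dvd one_pos h1
    omega
  have hζ1 : omg m ^ ε ≠ 1 := omg_zpow_ne_one m hm0 ε hεm
  have hterm : ∀ x : ℕ, Complex.exp (2 * Real.pi * Complex.I * ((((x:ℕ):ℂ) - 1/2)/m) * (ε:ℂ))
      = Complex.exp (-(Real.pi * Complex.I * ε)/m) * (omg m ^ ε) ^ x := by
    intro x
    have h0' : omg m ^ ε = Complex.exp ((ε:ℂ) * (2 * Real.pi * Complex.I / m)) :=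
      (Complex.exp_int_mul _ ε).symm
    have h1 : (omg m ^ ε) ^ x = Complex.exp (((x:ℕ):ℂ) * ((ε:ℂ) * (2 * Real.pi * Complex.I / m))) := by
      rw [h0', ← Complex.exp_nat_mul]
    rw [h1, ← Complex.exp_add]
    congr 1
    have hmc : (m:ℂ) ≠ 0 := Nat.cast_ne_zero.mpr hm0.ne'
    field_simp
    ring
  simp_rw [hterm]
  rw [← Finset.mul_sum]
  have hgeo : ∑ x ∈ Finset.Icc 1 m, (omg m ^ ε) ^ x = 0 := by
    rw [← Finset.Ico_add_one_right_eq_Icc, Finset.sum_Ico_eq_sum_range]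
    simp only [Nat.succ_sub_one, Nat.add_sub_cancel]
    have : ∀ i ∈ Finset.range m, (omg m ^ ε) ^ (1 + i) = (omg m ^ ε) * (omg m ^ ε) ^ i := by
      intro i _; rw [pow_add, pow_one]
    rw [Finset.sum_congr rfl this, ← Finset.mul_sum, geom_sum_eq hζ1]
    have hm1 : (omg m ^ ε) ^ m = 1 := by
      rw [← zpow_natCast (omg m ^ ε), ← _root_.zpow_mul, mul_comm, _root_.zpow_mul,
        zpow_natCast, omg_pow_d m hm0, _root_.one_zpow]
    rw [hm1, sub_self, zero_div, mul_zero]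
  rw [hgeo, mul_zero]

lemma val_shift (d l : ℕ) [NeZero d] (j : Fin d) :
    ((j + (l : Fin d) : Fin d) : ℕ) = ((j : ℕ) + l) % d := by
  rw [Fin.add_def]
  show ((j:ℕ) + ((l : Fin d) : ℕ)) % d = _
  rw [Fin.val_natCast, Nat.add_mod_mod]

lemma Aobs_apply' (d m x l : ℕ) [NeZero d] (j k : Fin d) :
    Aobs d m x l j k =
      if k = j + (l : Fin d) then
        Complex.exp (2 * Real.pi * Complex.I / d * (((k:ℕ):ℂ) - ((j:ℕ):ℂ)) *
          (((x : ℂ) - 1 / 2) / m))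
      else 0 := by
  rw [Aobs_apply d m x l (NeZero.pos d) j k]
  refine if_congr ?_ rfl rfl
  rw [Fin.ext_iff, val_shift, eq_comm]

lemma cast_shift (d l : ℕ) [NeZero d] (hl2 : l ≤ d - 1) (j : Fin d) :
    (((j + (l : Fin d) : Fin d) : ℕ) : ℂ) - ((j:ℕ):ℂ)
      = (l:ℂ) - (d:ℂ) * (((if (j:ℕ) + l < d then (0:ℤ) else 1) : ℤ) : ℂ) := by
  have hd : 0 < d := NeZero.pos d
  rw [val_shift]
  by_cases hjl : (j:ℕ) + l < d
  · rw [if_pos hjl, Nat.mod_eq_of_lt hjl]; push_cast; ring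
  · rw [if_neg hjl]
    have hge : d ≤ (j:ℕ) + l := le_of_not_gt hjl
    have hub : (j:ℕ) + l - d < d := by have := j.isLt; omega
    have hmod : ((j:ℕ) + l) % d = (j:ℕ) + l - d := by
      rw [Nat.mod_eq_sub_mod hge, Nat.mod_eq_of_lt hub]
    rw [hmod, Nat.cast_sub hge]
    push_cast
    ring

lemma xsum (d m l : ℕ) [NeZero d] (hm : 2 ≤ m) (hl1 : 1 ≤ l) (hl2 : l ≤ d - 1)
    (v : Fin d × Fin d → ℂ) :
    ∑ x ∈ Finset.Icc 1 m,
      star v ⬝ᵥ ((Aobs d m x l) ⊗ₖ ((Aobs d m x l).map (starRingEnd ℂ))).mulVec v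
    = (m:ℂ) * ∑ p : Fin d × Fin d,
        (if (((p.1:ℕ) + l < d) ↔ ((p.2:ℕ) + l < d)) then
          (starRingEnd ℂ) (v p) * v (p.1 + (l:Fin d), p.2 + (l:Fin d)) else 0) := by
  classical
  have hd : 0 < d := NeZero.pos d
  have hd' : (d:ℂ) ≠ 0 := Nat.cast_ne_zero.mpr hd.ne'
  have stepA : ∀ x : ℕ,
      star v ⬝ᵥ ((Aobs d m x l) ⊗ₖ ((Aobs d m x l).map (starRingEnd ℂ))).mulVec v
      = ∑ p : Fin d × Fin d, ((starRingEnd ℂ) (v p) * v (p.1 + (l:Fin d), p.2 + (l:Fin d))) *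
          Complex.exp (2 * Real.pi * Complex.I * ((((x:ℕ):ℂ) - 1/2)/m) *
            ((((if (p.2:ℕ) + l < d then (0:ℤ) else 1)
              - (if (p.1:ℕ) + l < d then (0:ℤ) else 1) : ℤ)):ℂ)) := by
    intro x
    simp only [dotProduct]
    apply Finset.sum_congr rfl
    intro p _
    have hsv : star v p = (starRingEnd ℂ) (v p) := rfl
    rw [hsv]
    have hrow : (((Aobs d m x l) ⊗ₖ ((Aobs d m x l).map (starRingEnd ℂ))).mulVec v) p
        = (Complex.exp (2 * Real.pi * Complex.I / d *
              (((((p.1 + (l:Fin d) : Fin d)):ℕ):ℂ) - ((p.1:ℕ):ℂ)) * (((x : ℂ) - 1 / 2) / m)) *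
           (starRingEnd ℂ) (Complex.exp (2 * Real.pi * Complex.I / d *
              (((((p.2 + (l:Fin d) : Fin d)):ℕ):ℂ) - ((p.2:ℕ):ℂ)) * (((x : ℂ) - 1 / 2) / m)))) *
          v (p.1 + (l:Fin d), p.2 + (l:Fin d)) := by
      simp only [Matrix.mulVec, dotProduct]
      rw [Finset.sum_eq_single (p.1 + (l:Fin d), p.2 + (l:Fin d))]
      · rw [Matrix.kroneckerMap_apply, Matrix.map_apply, Aobs_apply', Aobs_apply',
          if_pos rfl, if_pos rfl]
      · intro q _ hq
        rw [Matrix.kroneckerMap_apply, Matrix.map_apply, Aobs_apply', Aobs_apply']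
        by_cases h1 : q.1 = p.1 + (l:Fin d)
        · have h2 : q.2 ≠ p.2 + (l:Fin d) := by
            intro h2; exact hq (Prod.ext h1 h2)
          rw [if_neg h2]; simp
        · rw [if_neg h1]; simp
      · intro h; exact absurd (Finset.mem_univ _) h
    rw [hrow]
    have hphase : Complex.exp (2 * Real.pi * Complex.I / d *
            (((((p.1 + (l:Fin d) : Fin d)):ℕ):ℂ) - ((p.1:ℕ):ℂ)) * (((x : ℂ) - 1 / 2) / m)) *
          (starRingEnd ℂ) (Complex.exp (2 * Real.pi * Complex.I / d *
            (((((p.2 + (l:Fin d) : Fin d)):ℕ):ℂ) - ((p.2:ℕ):ℂ)) * (((x : ℂ) - 1 / 2) / m)))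
        = Complex.exp (2 * Real.pi * Complex.I * ((((x:ℕ):ℂ) - 1/2)/m) *
            ((((if (p.2:ℕ) + l < d then (0:ℤ) else 1)
              - (if (p.1:ℕ) + l < d then (0:ℤ) else 1) : ℤ)):ℂ)) := by
      rw [← Complex.exp_conj]
      rw [_root_.map_mul, _root_.map_mul, map_sub, conj_theta, conj_alpha,
        Complex.conj_natCast, Complex.conj_natCast]
      rw [← Complex.exp_add]
      congr 1
      rw [cast_shift d l hl2 p.1, cast_shift d l hl2 p.2, Int.cast_sub]
      generalize (((if (p.1:ℕ) + l < d then (0:ℤ) else 1) : ℤ) : ℂ) = w1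
      generalize (((if (p.2:ℕ) + l < d then (0:ℤ) else 1) : ℤ) : ℂ) = w2
      have hdd : (2 * (Real.pi:ℂ) * Complex.I / d) * d = 2 * Real.pi * Complex.I := by
        field_simp
      push_cast
      linear_combination ((((x:ℕ):ℂ) - 1/2)/m * (w2 - w1)) * hdd
    rw [hphase]
    ring
  rw [Finset.sum_congr rfl (fun x _ => stepA x)]
  rw [Finset.sum_comm, Finset.mul_sum]
  apply Finset.sum_congr rfl
  intro p _
  rw [← Finset.mul_sum]
  rw [exp_wrap_sum m hm _ (by split_ifs <;> omega)]
  by_cases hw : (((p.1:ℕ) + l < d) ↔ ((p.2:ℕ) + l < d))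
  · rw [if_pos hw]
    have h0 : ((if (p.2:ℕ) + l < d then (0:ℤ) else 1)
        - (if (p.1:ℕ) + l < d then (0:ℤ) else 1) : ℤ) = 0 := by
      by_cases hc : (p.1:ℕ) + l < d
      · rw [if_pos hc, if_pos (hw.mp hc)]; omega
      · rw [if_neg hc, if_neg (fun hd2 => hc (hw.mpr hd2))]; omega
    rw [if_pos h0]
    ring
  · have h0 : ((if (p.2:ℕ) + l < d then (0:ℤ) else 1)
        - (if (p.1:ℕ) + l < d then (0:ℤ) else 1) : ℤ) ≠ 0 := by
      split_ifs with a b b <;> try omega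
      all_goals exact absurd (by tauto) hw
    rw [if_neg h0, if_neg hw, mul_zero, mul_zero]

lemma dot_sum_matrix {ι κ : Type*} {pp : Type*} [Fintype pp] (s : Finset ι) (t : Finset κ)
    (M : ι → κ → Matrix pp pp ℂ) (u w : pp → ℂ) :
    u ⬝ᵥ (∑ i ∈ s, ∑ j ∈ t, M i j).mulVec w
      = ∑ i ∈ s, ∑ j ∈ t, u ⬝ᵥ (M i j).mulVec w := by
  have h1 : (∑ i ∈ s, ∑ j ∈ t, M i j).mulVec w = ∑ i ∈ s, ∑ j ∈ t, (M i j).mulVec w := by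
    have e1 : (∑ i ∈ s, ∑ j ∈ t, M i j) *ᵥ w = ∑ i ∈ s, (∑ j ∈ t, M i j) *ᵥ w :=
      map_sum (Matrix.mulVec.addMonoidHomLeft w) _ s
    rw [e1]
    apply Finset.sum_congr rfl
    intro i _
    exact map_sum (Matrix.mulVec.addMonoidHomLeft w) _ t
  rw [h1]
  simp only [dotProduct, Finset.sum_apply, Finset.mul_sum]
  rw [Finset.sum_comm]
  apply Finset.sum_congr rfl
  intro i _
  rw [Finset.sum_comm]

section analysis

variable (d l : ℕ) [NeZero d] (v : Fin d × Fin d → ℂ)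

noncomputable def Tl : ℂ :=
  ∑ p : Fin d × Fin d,
    (if (((p.1:ℕ) + l < d) ↔ ((p.2:ℕ) + l < d)) then
      (starRingEnd ℂ) (v p) * v (p.1 + (l:Fin d), p.2 + (l:Fin d)) else 0)

lemma sum_shift_normSq :
    ∑ p : Fin d × Fin d, Complex.normSq (v (p.1 + (l:Fin d), p.2 + (l:Fin d)))
      = ∑ p : Fin d × Fin d, Complex.normSq (v p) := by
  classical
  have := Equiv.sum_comp ((Equiv.addRight ((l:Fin d))).prodCongr (Equiv.addRight ((l:Fin d))))
    (fun p => Complex.normSq (v p))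
  convert this using 1
  rfl

lemma Tl_re_le (hnorm : ∑ p : Fin d × Fin d, Complex.normSq (v p) = 1) :
    (Tl d l v).re ≤ 1 := by
  classical
  have h1 : (Tl d l v).re ≤ ∑ p : Fin d × Fin d,
      ‖v p‖ * ‖v (p.1 + (l:Fin d), p.2 + (l:Fin d))‖ := by
    rw [Tl, Complex.re_sum]
    apply Finset.sum_le_sum
    intro p _
    split_ifs with hc
    · calc ((starRingEnd ℂ) (v p) * v (p.1 + (l:Fin d), p.2 + (l:Fin d))).re
          ≤ ‖(starRingEnd ℂ) (v p) * v (p.1 + (l:Fin d), p.2 + (l:Fin d))‖ :=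
            Complex.re_le_norm _
        _ = ‖v p‖ * ‖v (p.1 + (l:Fin d), p.2 + (l:Fin d))‖ := by
            rw [norm_mul, Complex.norm_conj]
    · simp only [Complex.zero_re]
      positivity
  have h2 : ∑ p : Fin d × Fin d,
      ‖v p‖ * ‖v (p.1 + (l:Fin d), p.2 + (l:Fin d))‖
      ≤ ∑ p : Fin d × Fin d, (Complex.normSq (v p)
          + Complex.normSq (v (p.1 + (l:Fin d), p.2 + (l:Fin d)))) / 2 := by
    apply Finset.sum_le_sum
    intro p _
    rw [← Complex.sq_norm, ← Complex.sq_norm]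
    nlinarith [sq_nonneg (‖v p‖
      - ‖v (p.1 + (l:Fin d), p.2 + (l:Fin d))‖)]
  have h3 : ∑ p : Fin d × Fin d, (Complex.normSq (v p)
      + Complex.normSq (v (p.1 + (l:Fin d), p.2 + (l:Fin d)))) / 2 = 1 := by
    rw [← Finset.sum_div, Finset.sum_add_distrib, hnorm, sum_shift_normSq d l v, hnorm]
    norm_num
  linarith

lemma Tl_eq (hnorm : ∑ p : Fin d × Fin d, Complex.normSq (v p) = 1)
    (heq : (Tl d l v).re = 1) :
    (∀ p : Fin d × Fin d,
        ‖v (p.1 + (l:Fin d), p.2 + (l:Fin d))‖ = ‖v p‖) ∧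
    (∀ p : Fin d × Fin d, ¬(((p.1:ℕ) + l < d) ↔ ((p.2:ℕ) + l < d)) → v p = 0) := by
  classical
  set g1 : Fin d × Fin d → ℝ := fun p =>
    if (((p.1:ℕ) + l < d) ↔ ((p.2:ℕ) + l < d)) then
      ‖v p‖ * ‖v (p.1 + (l:Fin d), p.2 + (l:Fin d))‖ else 0 with hg1
  set g2 : Fin d × Fin d → ℝ := fun p =>
    ‖v p‖ * ‖v (p.1 + (l:Fin d), p.2 + (l:Fin d))‖ with hg2
  set g3 : Fin d × Fin d → ℝ := fun p =>
    (Complex.normSq (v p)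
      + Complex.normSq (v (p.1 + (l:Fin d), p.2 + (l:Fin d)))) / 2 with hg3
  have h01 : (Tl d l v).re ≤ ∑ p, g1 p := by
    rw [Tl, Complex.re_sum]
    apply Finset.sum_le_sum
    intro p _
    rw [hg1]
    simp only
    split_ifs with hc
    · calc ((starRingEnd ℂ) (v p) * v (p.1 + (l:Fin d), p.2 + (l:Fin d))).re
          ≤ ‖(starRingEnd ℂ) (v p) * v (p.1 + (l:Fin d), p.2 + (l:Fin d))‖ :=
            Complex.re_le_norm _
        _ = ‖v p‖ * ‖v (p.1 + (l:Fin d), p.2 + (l:Fin d))‖ := by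
            rw [norm_mul, Complex.norm_conj]
    · simp only [Complex.zero_re, le_refl]
  have h12 : ∀ p : Fin d × Fin d, g1 p ≤ g2 p := by
    intro p
    rw [hg1, hg2]
    simp only
    split_ifs
    · exact le_refl _
    · positivity
  have h23 : ∀ p : Fin d × Fin d, g2 p ≤ g3 p := by
    intro p
    rw [hg2, hg3]
    simp only
    rw [← Complex.sq_norm, ← Complex.sq_norm]
    nlinarith [sq_nonneg (‖v p‖
      - ‖v (p.1 + (l:Fin d), p.2 + (l:Fin d))‖)]
  have hs3 : ∑ p, g3 p = 1 := by
    rw [hg3]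
    simp only
    rw [← Finset.sum_div, Finset.sum_add_distrib, hnorm, sum_shift_normSq d l v, hnorm]
    norm_num
  have hs2le : ∑ p, g2 p ≤ 1 := hs3 ▸ Finset.sum_le_sum (fun p _ => h23 p)
  have hs1le : ∑ p, g1 p ≤ ∑ p, g2 p := Finset.sum_le_sum (fun p _ => h12 p)
  have hs1 : ∑ p, g1 p = 1 := le_antisymm (le_trans hs1le hs2le) (heq ▸ h01)
  have hs2 : ∑ p, g2 p = 1 := le_antisymm hs2le (hs1 ▸ hs1le)
  have hptw23 : ∀ p : Fin d × Fin d, g2 p = g3 p := by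
    intro p
    have := (Finset.sum_eq_sum_iff_of_le (fun p _ => h23 p)).mp (hs2.trans hs3.symm)
    exact this p (Finset.mem_univ p)
  have hptw12 : ∀ p : Fin d × Fin d, g1 p = g2 p := by
    intro p
    have := (Finset.sum_eq_sum_iff_of_le (fun p _ => h12 p)).mp (hs1.trans hs2.symm)
    exact this p (Finset.mem_univ p)
  have habs : ∀ p : Fin d × Fin d,
      ‖v (p.1 + (l:Fin d), p.2 + (l:Fin d))‖ = ‖v p‖ := by
    intro p
    have h := hptw23 p
    rw [hg2, hg3] at h
    simp only at h
    rw [← Complex.sq_norm, ← Complex.sq_norm] at h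
    have hsq : (‖v p‖
        - ‖v (p.1 + (l:Fin d), p.2 + (l:Fin d))‖)^2 = 0 := by nlinarith
    have := pow_eq_zero_iff (n := 2) (by norm_num) |>.mp hsq
    linarith [sub_eq_zero.mp this]
  refine ⟨habs, ?_⟩
  intro p hc
  have h := hptw12 p
  rw [hg1, hg2] at h
  simp only at h
  rw [if_neg hc] at h
  have habs' := habs p
  have : ‖v p‖ * ‖v p‖ = 0 := by
    rw [← habs' ] at h ⊢
    linarith [h]
  have h0 : ‖v p‖ = 0 := by
    nlinarith [norm_nonneg (v p)]
  exact norm_eq_zero.mp h0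

lemma diag_shift (hnorm : ∑ p : Fin d × Fin d, Complex.normSq (v p) = 1)
    (hdiag : ∀ p : Fin d × Fin d, p.1 ≠ p.2 → v p = 0)
    (heq : (Tl d l v).re = 1) :
    ∀ j : Fin d, v (j + (l:Fin d), j + (l:Fin d)) = v (j, j) := by
  classical
  have hT : Tl d l v = ∑ j : Fin d, (starRingEnd ℂ) (v (j, j)) * v (j + (l:Fin d), j + (l:Fin d)) := by
    rw [Tl, Fintype.sum_prod_type]
    apply Finset.sum_congr rfl
    intro j1 _
    rw [Finset.sum_eq_single j1]
    · rw [if_pos Iff.rfl]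
    · intro j2 _ hne
      split_ifs
      · rw [hdiag (j1, j2) (fun hh => hne hh.symm), map_zero, zero_mul]
      · rfl
    · intro h; exact absurd (Finset.mem_univ _) h
  have hdnorm : ∑ j : Fin d, Complex.normSq (v (j, j)) = 1 := by
    rw [← hnorm, Fintype.sum_prod_type]
    apply Finset.sum_congr rfl
    intro j1 _
    rw [Finset.sum_eq_single j1]
    · intro j2 _ hne
      rw [hdiag (j1, j2) (fun hh => hne hh.symm)]
      simp
    · intro h; exact absurd (Finset.mem_univ _) h
  have hsnorm : ∑ j : Fin d, Complex.normSq (v (j + (l:Fin d), j + (l:Fin d))) = 1 := by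
    rw [← hdnorm]
    exact Equiv.sum_comp (Equiv.addRight ((l:Fin d))) (fun j => Complex.normSq (v (j, j)))
  have hzero : ∑ j : Fin d, Complex.normSq (v (j, j) - v (j + (l:Fin d), j + (l:Fin d))) = 0 := by
    have hre : (∑ j : Fin d, (starRingEnd ℂ) (v (j, j)) * v (j + (l:Fin d), j + (l:Fin d))).re = 1 := by
      rw [← hT]; exact heq
    rw [Complex.re_sum] at hre
    have expand : ∀ j : Fin d, Complex.normSq (v (j, j) - v (j + (l:Fin d), j + (l:Fin d)))
        = Complex.normSq (v (j, j)) + Complex.normSq (v (j + (l:Fin d), j + (l:Fin d)))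
          - 2 * ((starRingEnd ℂ) (v (j, j)) * v (j + (l:Fin d), j + (l:Fin d))).re := by
      intro j
      rw [Complex.normSq_sub]
      congr 2
      have : (starRingEnd ℂ) (v (j, j)) * v (j + (l:Fin d), j + (l:Fin d))
          = (starRingEnd ℂ) (v (j, j) * (starRingEnd ℂ) (v (j + (l:Fin d), j + (l:Fin d)))) := by
        rw [_root_.map_mul, Complex.conj_conj]
      rw [this, Complex.conj_re]
    rw [Finset.sum_congr rfl (fun j _ => expand j), Finset.sum_sub_distrib,
      Finset.sum_add_distrib, hdnorm, hsnorm, ← Finset.mul_sum, hre]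
    norm_num
  intro j
  have hj : Complex.normSq (v (j, j) - v (j + (l:Fin d), j + (l:Fin d))) = 0 := by
    have hnn : ∀ i ∈ (Finset.univ : Finset (Fin d)),
        0 ≤ Complex.normSq (v (i, i) - v (i + (l:Fin d), i + (l:Fin d))) :=
      fun i _ => Complex.normSq_nonneg _
    have := (Finset.sum_eq_zero_iff_of_nonneg hnn).mp hzero
    exact this j (Finset.mem_univ j)
  have := Complex.normSq_eq_zero.mp hj
  exact (sub_eq_zero.mp this).symm

end analysis

lemma main_aux (d m : ℕ) [NeZero d] (hm : 2 ≤ m)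
    (U₁ U₂ : Matrix (Fin d) (Fin d) ℝ)
    (hU2 : U₂ᵀ * U₂ = 1) (hU1' : U₁ * U₁ᵀ = 1)
    (hviol : star (((U₁.map Complex.ofReal) ⊗ₖ (U₂.map Complex.ofReal)).mulVec (Phi d)) ⬝ᵥ
        (Bop d m).mulVec
          (((U₁.map Complex.ofReal) ⊗ₖ (U₂.map Complex.ofReal)).mulVec (Phi d))
      = (((m : ℝ) * ((d : ℝ) - 1) : ℝ) : ℂ)) :
    U₁ = U₂ ∨ U₁ = -U₂ := by
  classical
  have hd : 0 < d := NeZero.pos d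
  have hd1 : 1 ≤ d := hd
  set R : Matrix (Fin d) (Fin d) ℝ := U₁ * U₂ᵀ with hR
  have hRRT : R * Rᵀ = 1 := by
    rw [hR, Matrix.transpose_mul, Matrix.transpose_transpose]
    calc U₁ * U₂ᵀ * (U₂ * U₁ᵀ) = U₁ * (U₂ᵀ * U₂) * U₁ᵀ := by
          rw [Matrix.mul_assoc, Matrix.mul_assoc, Matrix.mul_assoc]
      _ = 1 := by rw [hU2, Matrix.mul_one, hU1']
  set sR : ℝ := (Real.sqrt d)⁻¹ with hsR
  have hsd : Real.sqrt d ≠ 0 := by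
    refine Real.sqrt_ne_zero'.mpr ?_
    exact_mod_cast hd
  have hsR0 : sR ≠ 0 := inv_ne_zero hsd
  have hsRsq : sR * sR = (d:ℝ)⁻¹ := by
    rw [hsR, ← mul_inv, Real.mul_self_sqrt (Nat.cast_nonneg d)]
  set v : Fin d × Fin d → ℂ :=
    ((U₁.map Complex.ofReal) ⊗ₖ (U₂.map Complex.ofReal)).mulVec (Phi d) with hv
  have hvf : ∀ p : Fin d × Fin d, v p = ((sR : ℝ) : ℂ) * ((R p.1 p.2 : ℝ) : ℂ) := by
    intro p
    rw [hv]
    show ∑ q : Fin d × Fin d,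
        ((U₁.map Complex.ofReal) ⊗ₖ (U₂.map Complex.ofReal)) p q * Phi d q = _
    rw [Fintype.sum_prod_type]
    have inner : ∀ q1 : Fin d, (∑ q2 : Fin d,
        ((U₁.map Complex.ofReal) ⊗ₖ (U₂.map Complex.ofReal)) p (q1, q2) * Phi d (q1, q2))
        = ((U₁ p.1 q1 : ℝ) : ℂ) * ((U₂ p.2 q1 : ℝ) : ℂ) * ((sR : ℝ) : ℂ) := by
      intro q1
      rw [Finset.sum_eq_single q1]
      · rw [Matrix.kroneckerMap_apply, Matrix.map_apply, Matrix.map_apply, Phi, if_pos rfl]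
      · intro q2 _ hne
        have hz : Phi d (q1, q2) = 0 := by
          rw [Phi]
          exact if_neg (fun h => hne (h.symm))
        rw [hz, mul_zero]
      · intro h; exact absurd (Finset.mem_univ _) h
    rw [Finset.sum_congr rfl (fun q1 _ => inner q1)]
    rw [hR, Matrix.mul_apply, Complex.ofReal_sum, Finset.mul_sum]
    apply Finset.sum_congr rfl
    intro k _
    rw [Matrix.transpose_apply]
    push_cast
    ring
  have htr : ∑ i : Fin d, ∑ k : Fin d, (R i k)^2 = (d:ℝ) := by
    have hrow : ∀ i : Fin d, ∑ k : Fin d, (R i k)^2 = (R * Rᵀ) i i := by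
      intro i
      rw [Matrix.mul_apply]
      apply Finset.sum_congr rfl
      intro k _
      rw [Matrix.transpose_apply]
      ring
    rw [Finset.sum_congr rfl (fun i _ => hrow i), hRRT]
    simp [Matrix.one_apply]
  have hnorm : ∑ p : Fin d × Fin d, Complex.normSq (v p) = 1 := by
    have hterm : ∀ p : Fin d × Fin d,
        Complex.normSq (v p) = (d:ℝ)⁻¹ * (R p.1 p.2)^2 := by
      intro p
      rw [hvf p, Complex.normSq_mul, Complex.normSq_ofReal, Complex.normSq_ofReal, hsRsq]
      ring
    rw [Finset.sum_congr rfl (fun p _ => hterm p), ← Finset.mul_sum, Fintype.sum_prod_type, htr]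
    field_simp
  have hB : star v ⬝ᵥ (Bop d m).mulVec v
      = (m:ℂ) * ∑ l ∈ Finset.Icc 1 (d-1), Tl d l v := by
    rw [Bop, dot_sum_matrix, Finset.sum_comm, Finset.mul_sum]
    apply Finset.sum_congr rfl
    intro l hl
    obtain ⟨hl1, hl2⟩ := Finset.mem_Icc.mp hl
    refine Eq.trans ?_ (congrArg _ (rfl : Tl d l v = Tl d l v))
    exact (xsum d m l hm hl1 hl2 v).trans (by rw [Tl])
  have hm0 : (m:ℝ) ≠ 0 := Nat.cast_ne_zero.mpr (by omega)
  have hsum_re : ∑ l ∈ Finset.Icc 1 (d-1), (Tl d l v).re = (d:ℝ) - 1 := by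
    have h := hviol
    rw [hB] at h
    have hre := congrArg Complex.re h
    rw [Complex.ofReal_re] at hre
    have hmul : ((m:ℂ) * ∑ l ∈ Finset.Icc 1 (d-1), Tl d l v).re
        = (m:ℝ) * (∑ l ∈ Finset.Icc 1 (d-1), Tl d l v).re := by
      rw [Complex.mul_re]
      simp
    rw [hmul, Complex.re_sum] at hre
    have := mul_left_cancel₀ hm0 hre
    rw [this]
  have hcard : (Finset.Icc 1 (d-1)).card = d - 1 := by
    rw [Nat.card_Icc]
    omega
  have hall : ∀ l ∈ Finset.Icc 1 (d-1), (Tl d l v).re = 1 := by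
    by_contra hc
    push_neg at hc
    obtain ⟨l0, hl0, hne⟩ := hc
    have hlt : (Tl d l0 v).re < 1 := lt_of_le_of_ne (Tl_re_le d l0 v hnorm) hne
    have hslt := Finset.sum_lt_sum (f := fun l => (Tl d l v).re) (g := fun _ => (1:ℝ))
      (fun i hi => Tl_re_le d i v hnorm) ⟨l0, hl0, hlt⟩
    rw [hsum_re, Finset.sum_const, hcard, nsmul_eq_mul, mul_one] at hslt
    have hcast : ((d-1:ℕ):ℝ) = (d:ℝ) - 1 := by
      rw [Nat.cast_sub hd1]; norm_num
    rw [hcast] at hslt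
    exact lt_irrefl _ hslt
  have hoffdiag : ∀ p : Fin d × Fin d, p.1 ≠ p.2 → v p = 0 := by
    intro p hne
    have ha : (p.1:ℕ) < d := p.1.isLt
    have hb : (p.2:ℕ) < d := p.2.isLt
    have hab : (p.1:ℕ) ≠ (p.2:ℕ) := fun h => hne (Fin.ext h)
    set l := d - max (p.1:ℕ) (p.2:ℕ) with hldef
    have hl1 : 1 ≤ l := by omega
    have hl2 : l ≤ d - 1 := by omega
    have hcnot : ¬(((p.1:ℕ) + l < d) ↔ ((p.2:ℕ) + l < d)) := by omega
    have heq1 : (Tl d l v).re = 1 := hall l (Finset.mem_Icc.mpr ⟨hl1, hl2⟩)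
    exact (Tl_eq d l v hnorm heq1).2 p hcnot
  have hdiagconst : ∀ j : Fin d, v (j, j) = v (0, 0) := by
    intro j
    by_cases hj : j = 0
    · rw [hj]
    · have hj1 : 1 ≤ (j:ℕ) := by
        rcases Nat.eq_zero_or_pos (j:ℕ) with h | h
        · exact absurd (Fin.ext (by simp [h]) : j = 0) hj
        · exact h
      have hj2 : (j:ℕ) ≤ d - 1 := by have := j.isLt; omega
      have heq1 : (Tl d (j:ℕ) v).re = 1 := hall _ (Finset.mem_Icc.mpr ⟨hj1, hj2⟩)
      have hds := diag_shift d (j:ℕ) v hnorm hoffdiag heq1 0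
      have e : (0 : Fin d) + (((j:ℕ):ℕ) : Fin d) = j := by
        rw [zero_add, Fin.cast_val_eq_self]
      rw [e] at hds
      exact hds
  have hRoff : ∀ i j : Fin d, i ≠ j → R i j = 0 := by
    intro i j hij
    have h0 := hoffdiag (i, j) hij
    rw [hvf] at h0
    have hsne : ((sR:ℝ):ℂ) ≠ 0 := Complex.ofReal_ne_zero.mpr hsR0
    have hz : ((R i j : ℝ) : ℂ) = 0 := by
      rcases mul_eq_zero.mp h0 with h | h
      · exact absurd h hsne
      · exact h
    exact_mod_cast hz
  have hRdiag : ∀ j : Fin d, R j j = R 0 0 := by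
    intro j
    have h0 := hdiagconst j
    rw [hvf, hvf] at h0
    have hsne : ((sR:ℝ):ℂ) ≠ 0 := Complex.ofReal_ne_zero.mpr hsR0
    have hz := mul_left_cancel₀ hsne h0
    exact_mod_cast hz
  set r : ℝ := R 0 0 with hr
  have hrr : r * r = 1 := by
    have h00 := congrFun (congrFun hRRT 0) 0
    rw [Matrix.mul_apply, Matrix.one_apply_eq] at h00
    rw [Finset.sum_eq_single 0] at h00
    · rw [Matrix.transpose_apply] at h00
      exact h00
    · intro k _ hk
      rw [hRoff 0 k (fun h => hk h.symm), zero_mul]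
    · intro h; exact absurd (Finset.mem_univ _) h
  have hRr : R = r • (1 : Matrix (Fin d) (Fin d) ℝ) := by
    ext i j
    by_cases hij : i = j
    · subst hij
      rw [hRdiag i]
      simp [Matrix.one_apply_eq]
    · rw [hRoff i j hij]
      simp [Matrix.one_apply_ne hij]
  have hU1eq : U₁ = R * U₂ := by
    rw [hR, Matrix.mul_assoc, hU2, Matrix.mul_one]
  rcases mul_self_eq_one_iff.mp hrr with h | h
  · left
    rw [hU1eq, hRr, h, one_smul, Matrix.one_mul]
  · right
    rw [hU1eq, hRr, h, Matrix.smul_mul, Matrix.one_mul, neg_smul, one_smul]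

theorem max_violation_implies_equal_up_to_sign (n m : ℕ) (hm : 2 ≤ m)
    (U₁ U₂ : Matrix (Fin (2 ^ n)) (Fin (2 ^ n)) ℝ)
    (h1 : U₁ ∈ Matrix.orthogonalGroup (Fin (2 ^ n)) ℝ)
    (h2 : U₂ ∈ Matrix.orthogonalGroup (Fin (2 ^ n)) ℝ)
    (hviol : star (((U₁.map Complex.ofReal) ⊗ₖ (U₂.map Complex.ofReal)).mulVec (Phi (2 ^ n))) ⬝ᵥ
        (Bop (2 ^ n) m).mulVec
          (((U₁.map Complex.ofReal) ⊗ₖ (U₂.map Complex.ofReal)).mulVec (Phi (2 ^ n)))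
      = ((m : ℝ) * ((2 ^ n : ℝ) - 1) : ℝ)) :
    U₁ = U₂ ∨ U₁ = -U₂ := by
  haveI : NeZero (2^n) := ⟨(pow_pos (by norm_num : (0:ℕ) < 2) n).ne'⟩
  have hstar1 : star U₁ = U₁ᵀ := by
    ext i j; simp [Matrix.star_apply]
  have hstar2 : star U₂ = U₂ᵀ := by
    ext i j; simp [Matrix.star_apply]
  have hU2 : U₂ᵀ * U₂ = 1 := by
    have h := (Unitary.mem_iff.mp h2).1
    rwa [hstar2] at h
  have hU1' : U₁ * U₁ᵀ = 1 := by
    have h := (Unitary.mem_iff.mp h1).2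
    rwa [hstar1] at h
  apply main_aux (2^n) m hm U₁ U₂ hU2 hU1'
  rw [hviol]
  congr 1
  push_cast
  ring
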